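/- Suppose the weight profile w is not cumulatively ordered. Then in the problem where every object has capacity 1 and every agent has the same strict preference ranking, listing all m objects as acceptable in a common fixed order a_1 P a_2 P ⋯ P a_m P ∅, no w-popular matching exists. -/

import Mathlib

open scoped Classical

section Defs

variable {I O : Type} [Fintype I] [Fintype O]

/-- A mechanism maps each problem (preference profile, capacity profile) to an assignment. -/
abbrev Mechanism (I O : Type) : Type :=
  (I → LinearOrder (Option O)) → (O → ℕ) → I → Option O

/-- `x` is strictly preferred to `y` under the strict preference (linear order) `p`,
where `none` represents being unassigned (∅). -/
def Prefers (p : LinearOrder (Option O)) (x y : Option O) : Prop := p.lt y x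

/-- A matching: each object `a` is assigned to at most `q a` agents. -/
def IsMatching (q : O → ℕ) (μ : I → Option O) : Prop :=
  ∀ a : O, (Finset.univ.filter fun i : I => μ i = some a).card ≤ q a

/-- Every object has capacity at least one. -/
def ValidCaps (q : O → ℕ) : Prop := ∀ a : O, 1 ≤ q a

/-- `μ` is more w-popular than `μ'`. -/
def MoreWPopular (w : I → ℝ) (P : I → LinearOrder (Option O)) (μ μ' : I → Option O) : Prop :=
  (∑ j ∈ Finset.univ.filter fun j : I => Prefers (P j) (μ' j) (μ j), w j)
    < ∑ i ∈ Finset.univ.filter fun i : I => Prefers (P i) (μ i) (μ' i), w i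

/-- `μ` is a w-popular matching for problem `(P, q)`. -/
def WPopular (w : I → ℝ) (P : I → LinearOrder (Option O)) (q : O → ℕ)
    (μ : I → Option O) : Prop :=
  IsMatching q μ ∧ ∀ μ', IsMatching q μ' → ¬ MoreWPopular w P μ' μ

/-- `μ` is more popular than `μ'` (unweighted, counting agents). -/
def MorePopular (P : I → LinearOrder (Option O)) (μ μ' : I → Option O) : Prop :=
  (Finset.univ.filter fun j : I => Prefers (P j) (μ' j) (μ j)).card
    < (Finset.univ.filter fun i : I => Prefers (P i) (μ i) (μ' i)).card

/-- `μ` is a popular matching for problem `(P, q)`. -/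
def Popular (P : I → LinearOrder (Option O)) (q : O → ℕ) (μ : I → Option O) : Prop :=
  IsMatching q μ ∧ ∀ μ', IsMatching q μ' → ¬ MorePopular P μ' μ

/-- `μ'` Pareto improves upon `μ`. -/
def ParetoImproves (P : I → LinearOrder (Option O)) (μ' μ : I → Option O) : Prop :=
  (∀ i : I, (P i).le (μ i) (μ' i)) ∧ ∃ j : I, Prefers (P j) (μ' j) (μ j)

/-- `μ` is non-wasteful: no agent prefers an object with unfilled capacity to her assignment. -/
def NonWasteful (P : I → LinearOrder (Option O)) (q : O → ℕ) (μ : I → Option O) : Prop :=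
  ∀ (i : I) (a : O), (Finset.univ.filter fun j : I => μ j = some a).card < q a →
    ¬ Prefers (P i) (some a) (μ i)

/-- The enumeration `e` lists the agents in weakly decreasing order of weight. -/
def DecreasingEnum (w : I → ℝ) (e : Fin (Fintype.card I) ≃ I) : Prop :=
  ∀ j k : Fin (Fintype.card I), j ≤ k → w (e k) ≤ w (e j)

/-- The weight profile is cumulatively ordered (w.r.t. the decreasing enumeration `e`):
each agent's weight is at least the sum of the weights of all later agents. -/
def CumulativelyOrdered (w : I → ℝ) (e : Fin (Fintype.card I) ≃ I) : Prop :=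
  ∀ j : Fin (Fintype.card I),
    (∑ k ∈ Finset.univ.filter fun k : Fin (Fintype.card I) => j < k, w (e k)) ≤ w (e j)

/-- All weights are pairwise different. -/
def DistinctWeights (w : I → ℝ) : Prop := Function.Injective w

/-- Essentially distinct (w.r.t. the decreasing enumeration `e`): all weights except possibly
the last two are pairwise different, the last two are equal, and the third-from-last weight is
at least the sum of the last two.  (Paper indices `i_1, …, i_n` correspond to `e 0, …, e (n-1)`.) -/
def EssentiallyDistinct (w : I → ℝ) (e : Fin (Fintype.card I) ≃ I) : Prop :=
  (∀ j k : Fin (Fintype.card I), j < k → (k : ℕ) + 2 ≤ Fintype.card I → w (e j) ≠ w (e k)) ∧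
  (∀ j k : Fin (Fintype.card I), (j : ℕ) + 2 = Fintype.card I → (k : ℕ) + 1 = Fintype.card I →
    w (e j) = w (e k)) ∧
  (∀ j k l : Fin (Fintype.card I), (j : ℕ) + 3 = Fintype.card I →
    (k : ℕ) + 2 = Fintype.card I → (l : ℕ) + 1 = Fintype.card I →
    w (e k) + w (e l) ≤ w (e j))

/-- The most preferred element (under `p`) of `{∅} ∪ {objects with remaining capacity}`. -/
noncomputable def sdChoice (p : LinearOrder (Option O)) (rem : O → ℕ) : Option O :=
  @Finset.max' (Option O) p
    (insert none ((Finset.univ.filter fun a : O => 0 < rem a).image some))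
    ⟨none, Finset.mem_insert_self _ _⟩

/-- State of the serial dictatorship after the first `k` agents (in the order `e`) have picked:
the partial assignment and the remaining capacities. -/
noncomputable def sdState (e : Fin (Fintype.card I) ≃ I)
    (P : I → LinearOrder (Option O)) (q : O → ℕ) : ℕ → (I → Option O) × (O → ℕ)
  | 0 => (fun _ => none, q)
  | k + 1 =>
    let prev := sdState e P q k
    if h : k < Fintype.card I then
      let i := e ⟨k, h⟩
      let c := sdChoice (P i) prev.2
      (Function.update prev.1 i c, fun a => if c = some a then prev.2 a - 1 else prev.2 a)
    else prev

/-- The outcome of the serial dictatorship with agent ordering `e` at problem `(P, q)`: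
agents pick, one by one in the order `e`, their most preferred acceptable object with
remaining capacity (and get ∅ if none remains). -/
noncomputable def SD (e : Fin (Fintype.card I) ≃ I)
    (P : I → LinearOrder (Option O)) (q : O → ℕ) : I → Option O :=
  (sdState e P q (Fintype.card I)).1

/-- An agent ordering is consistent with the weight profile `w` if agents with strictly larger
weight come strictly earlier. -/
def ConsistentOrder (w : I → ℝ) (e : Fin (Fintype.card I) ≃ I) : Prop :=
  ∀ i j : I, w j < w i → e.symm i < e.symm j

/-- A mechanism always produces a matching. -/
def IsMechanism (ψ : Mechanism I O) : Prop :=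
  ∀ P q, ValidCaps q → IsMatching q (ψ P q)

/-- Strategy-proofness: no agent can ever obtain a strictly preferred assignment
by misreporting. -/
def StrategyProof (ψ : Mechanism I O) : Prop :=
  ∀ P q, ValidCaps q → ∀ (i : I) (P'i : LinearOrder (Option O)),
    ¬ Prefers (P i) (ψ (Function.update P i P'i) q i) (ψ P q i)

/-- A mechanism is w-popular if its outcome is w-popular whenever a w-popular matching exists. -/
def WPopularMech (w : I → ℝ) (ψ : Mechanism I O) : Prop :=
  ∀ P q, ValidCaps q → (∃ μ, WPopular w P q μ) → WPopular w P q (ψ P q)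

/-- A mechanism is popular if its outcome is popular whenever a popular matching exists. -/
def PopularMech (ψ : Mechanism I O) : Prop :=
  ∀ P q, ValidCaps q → (∃ μ, Popular P q μ) → Popular P q (ψ P q)

/-- A mechanism is non-wasteful if its outcome is always non-wasteful. -/
def NonWastefulMech (ψ : Mechanism I O) : Prop :=
  ∀ P q, ValidCaps q → NonWasteful P q (ψ P q)

/-- `p` declares `a` as its only acceptable object (the class 𝒫ₐ). -/
def OnlyAcceptable (p : LinearOrder (Option O)) (a : O) : Prop :=
  p.lt none (some a) ∧ ∀ b : O, b ≠ a → p.lt (some b) none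

/-- `p` declares no object acceptable (the class 𝒫_∅). -/
def NothingAcceptable (p : LinearOrder (Option O)) : Prop :=
  ∀ b : O, p.lt (some b) none

/-- Preserving dispute resolutions. -/
def PreservesDisputeResolutions (ψ : Mechanism I O) : Prop :=
  ∀ P q, ValidCaps q → ∀ (i j : I) (a : O) (P'i : LinearOrder (Option O)),
    ψ P q j = some a → Prefers (P i) (some a) (ψ P q i) →
    OnlyAcceptable P'i a → ψ (Function.update P i P'i) q i = none →
    ∀ (P'' : I → LinearOrder (Option O)) (q' : O → ℕ), ValidCaps q' → q' a = 1 →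
      OnlyAcceptable (P'' i) a → OnlyAcceptable (P'' j) a →
      (∀ k : I, k ≠ i → k ≠ j → NothingAcceptable (P'' k)) →
      ψ P'' q' i = none ∧ ψ P'' q' j = some a

/-- `P'` is a (pure) Nash equilibrium of the preference-reporting game induced by `ψ`
at the problem `(P, q)` (true preferences `P`). -/
def NashEq (ψ : Mechanism I O) (P : I → LinearOrder (Option O)) (q : O → ℕ)
    (P' : I → LinearOrder (Option O)) : Prop :=
  ∀ (i : I) (P''i : LinearOrder (Option O)),
    ¬ Prefers (P i) (ψ (Function.update P' i P''i) q i) (ψ P' q i)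

/-- The mechanism admits a Nash equilibrium at every problem. -/
def AdmitsNash (ψ : Mechanism I O) : Prop :=
  ∀ P q, ValidCaps q → ∃ P', NashEq ψ P q P'

/-- w-popularity in equilibrium: every Nash-equilibrium outcome is w-popular
whenever a w-popular matching exists. -/
def WPopularInEquilibrium (w : I → ℝ) (ψ : Mechanism I O) : Prop :=
  ∀ P q, ValidCaps q → ∀ P', NashEq ψ P q P' →
    (∃ μ, WPopular w P q μ) → WPopular w P q (ψ P' q)

end Defs

/-! A `w`-popular matching wastes no object, so when `|O| ≥ |N|` every agent is assigned and the
matching is injective. For any set `A` of agents, rotating the objects held in `A` one step up the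
common ranking makes everyone in `A` except its best-served agent `x` better off and only `x` worse
off; popularity therefore forces `w x ≥ ∑_{A \ {x}} w`. For `A = {i_j, …, i_n}`, where `j` witnesses
that `w` is not cumulatively ordered, `w x ≤ w_{i_j} < ∑_{k > j} w_{i_k} ≤ ∑_{A \ {x}} w`. -/

open Finset

section Matchings

variable {I O : Type} [Fintype I]

lemma IsMatching.comp_perm {q : O → ℕ} {μ : I → Option O} (hμ : IsMatching q μ)
    (σ : Equiv.Perm I) : IsMatching q (μ ∘ σ) := by
  intro a
  have hmap : (univ.filter fun i => μ i = some a).map σ.symm.toEmbedding =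
      univ.filter fun i => (μ ∘ σ) i = some a := by
    ext i
    simp
  rw [← hmap, card_map]
  exact hμ a

lemma IsMatching.update {q : O → ℕ} {μ : I → Option O} (hμ : IsMatching q μ) (i : I) {a : O}
    (ha : (univ.filter fun j => μ j = some a).card < q a) :
    IsMatching q (Function.update μ i (some a)) := by
  intro b
  by_cases hba : b = a
  · subst hba
    have hsub : (univ.filter fun j => Function.update μ i (some b) j = some b) ⊆
        insert i (univ.filter fun j => μ j = some b) := by
      intro j
      by_cases hji : j = i <;> simp [hji, Function.update_of_ne]
    exact (card_le_card hsub).trans ((card_insert_le _ _).trans ha)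
  · have hsub : (univ.filter fun j => Function.update μ i (some a) j = some b) ⊆
        univ.filter fun j => μ j = some b := by
      intro j
      by_cases hji : j = i <;> simp [hji, Function.update_of_ne, Ne.symm hba]
    exact (card_le_card hsub).trans (hμ b)

lemma IsMatching.injective {μ : I → Option O} (hμ : IsMatching (fun _ : O => 1) μ)
    (hμ_ne : ∀ i, μ i ≠ none) : Function.Injective μ := by
  intro i j hij
  obtain ⟨a, ha⟩ := Option.ne_none_iff_exists'.mp (hμ_ne i)
  exact card_le_one.mp (hμ a) i (by simp [ha]) j (by simp [← hij, ha])

lemma exists_forall_ne_some_of_eq_none [Fintype O] (hIO : Fintype.card I ≤ Fintype.card O)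
    {μ : I → Option O} {i : I} (hi : μ i = none) : ∃ a : O, ∀ j, μ j ≠ some a := by
  by_contra! h
  have himage : univ.image μ = univ := eq_univ_of_forall fun
    | none => mem_image.mpr ⟨i, mem_univ _, hi⟩
    | some a => by obtain ⟨j, hj⟩ := h a; exact mem_image.mpr ⟨j, mem_univ _, hj⟩
  have hcard := card_image_le (s := (univ : Finset I)) (f := μ)
  rw [himage, card_univ, card_univ, Fintype.card_option] at hcard
  omega

end Matchings

lemma Finset.exists_perm_cycle_ascending {α : Type*} [LinearOrder α] (A : Finset α)
    (hA : A.Nonempty) :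
    ∃ σ : Equiv.Perm α, (∀ y ∉ A, σ y = y) ∧ σ (A.max' hA) = A.min' hA ∧
      ∀ y ∈ A, y ≠ A.max' hA → y < σ y := by
  obtain ⟨k, hk⟩ : ∃ k, A.card = k + 1 := Nat.exists_eq_succ_of_ne_zero hA.card_pos.ne'
  set f := A.orderIsoOfFin hk
  set σ := (finRotate (k + 1)).extendDomain f.toEquiv
  have hσ : ∀ i, σ (A.orderEmbOfFin hk i) = A.orderEmbOfFin hk (finRotate (k + 1) i) :=
    fun i => Equiv.Perm.extendDomain_apply_image _ f.toEquiv i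
  have hlast : A.orderEmbOfFin hk (Fin.last k) = A.max' hA := orderEmbOfFin_last hk k.succ_pos
  refine ⟨σ, fun y hy => Equiv.Perm.extendDomain_apply_not_subtype _ _ hy, ?_, ?_⟩
  · rw [← hlast, hσ, finRotate_last]
    exact orderEmbOfFin_zero hk k.succ_pos
  · intro y hy hne
    obtain ⟨i, rfl⟩ : y ∈ Set.range (A.orderEmbOfFin hk) := by
      rwa [range_orderEmbOfFin]
    have hi : i ≠ Fin.last k := by rintro rfl; exact hne hlast
    rw [hσ]
    apply (A.orderEmbOfFin hk).strictMono
    rw [Fin.lt_def, coe_finRotate_of_ne_last hi]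
    omega

section Popularity

variable {I O : Type} [Fintype I]

lemma moreWPopular_of_prefers_iff (w : I → ℝ) {P : I → LinearOrder (Option O)}
    {μ μ' : I → Option O} {B C : Finset I}
    (hB : ∀ i, Prefers (P i) (μ' i) (μ i) ↔ i ∈ B) (hC : ∀ i, Prefers (P i) (μ i) (μ' i) ↔ i ∈ C)
    (h : ∑ i ∈ C, w i < ∑ i ∈ B, w i) : MoreWPopular w P μ' μ := by
  have hB' : univ.filter (fun i => Prefers (P i) (μ' i) (μ i)) = B := by ext; simp [hB]
  have hC' : univ.filter (fun i => Prefers (P i) (μ i) (μ' i)) = C := by ext; simp [hC]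
  rwa [MoreWPopular, hB', hC']

lemma WPopular.nonWasteful {w : I → ℝ} (hw : ∀ i, 0 < w i) {P : I → LinearOrder (Option O)}
    {q : O → ℕ} {μ : I → Option O} (hμ : WPopular w P q μ) : NonWasteful P q μ := by
  intro i a ha hpref
  refine hμ.2 _ (hμ.1.update i ha) (moreWPopular_of_prefers_iff w (B := {i}) (C := ∅) ?_ ?_ ?_)
  · intro j
    by_cases hji : j = i
    · subst hji; simpa using hpref
    · simp [hji, Prefers]
  · intro j
    by_cases hji : j = i
    · subst hji; simpa [Prefers] using @lt_asymm _ (P j).toPreorder _ _ hpref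
    · simp [hji, Prefers]
  · simpa using hw i

lemma WPopular.sum_erase_le {w : I → ℝ} {p : LinearOrder (Option O)} {q : O → ℕ}
    {μ : I → Option O} (hμ : WPopular w (fun _ => p) q μ) (hinj : Function.Injective μ)
    {A : Finset I} {x : I} (hxA : x ∈ A) (hx : ∀ y ∈ A, p.le (μ y) (μ x)) (hwx : 0 ≤ w x) :
    ∑ y ∈ A.erase x, w y ≤ w x := by
  let _ : LinearOrder (Option O) := p
  by_contra! h
  have hcard : 1 < A.card := by
    have hne : (A.erase x).Nonempty := by
      by_contra hemp
      rw [not_nonempty_iff_eq_empty.mp hemp, sum_empty] at h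
      linarith
    have := card_erase_of_mem hxA ▸ hne.card_pos
    omega
  obtain ⟨σ, hout, hσx, hσlt⟩ : ∃ σ : Equiv.Perm I, (∀ y ∉ A, σ y = y) ∧ μ (σ x) < μ x ∧
      ∀ y ∈ A, y ≠ x → μ y < μ (σ y) := by
    let _ : LinearOrder I := LinearOrder.lift' μ hinj
    have hA : A.Nonempty := ⟨x, hxA⟩
    have hmax : A.max' hA = x := le_antisymm (A.max'_le hA _ hx) (A.le_max' _ hxA)
    obtain ⟨σ, hout, hσmax, hσlt⟩ := A.exists_perm_cycle_ascending hA
    refine ⟨σ, hout, ?_, fun y hy hyx => hσlt y hy (hmax ▸ hyx)⟩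
    rw [← hmax, hσmax]
    exact A.min'_lt_max'_of_card hcard
  refine hμ.2 _ (hμ.1.comp_perm σ)
    (moreWPopular_of_prefers_iff w (B := A.erase x) (C := {x}) (fun y => ?_) (fun y => ?_)
      (by simpa using h))
  · show μ y < μ (σ y) ↔ y ∈ A.erase x
    by_cases hyA : y ∈ A
    · by_cases hyx : y = x
      · subst hyx; simp [hσx.not_gt]
      · simp [hyx, hyA, hσlt y hyA hyx]
    · simp [hyA, hout y hyA]
  · show μ (σ y) < μ y ↔ y ∈ {x}
    by_cases hyA : y ∈ A
    · by_cases hyx : y = x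
      · subst hyx; simp [hσx]
      · simp [hyx, (hσlt y hyA hyx).not_gt]
    · simp [hout y hyA, (ne_of_mem_of_not_mem hxA hyA).symm]

end Popularity

theorem stmt5_general {I O : Type} [Fintype I] [Fintype O]
    (hIO : Fintype.card I ≤ Fintype.card O)
    (w : I → ℝ) (hw : ∀ i, 0 < w i)
    (e : Fin (Fintype.card I) ≃ I) (he : DecreasingEnum w e)
    (hco : ¬ CumulativelyOrdered w e)
    (p : LinearOrder (Option O)) (hp : ∀ a : O, p.lt none (some a)) :
    ∀ μ : I → Option O, ¬ WPopular w (fun _ => p) (fun _ => 1) μ := by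
  let _ : LinearOrder (Option O) := p
  intro μ hμ
  have hinj : Function.Injective μ := hμ.1.injective fun i hi => by
    obtain ⟨a, ha⟩ := exists_forall_ne_some_of_eq_none hIO hi
    refine hμ.nonWasteful hw i a (by simp [ha]) ?_
    rw [hi]; exact hp a
  obtain ⟨j, hj⟩ : ∃ j, w (e j) < ∑ k ∈ Ioi j, w (e k) := by
    simpa [CumulativelyOrdered, filter_lt_eq_Ioi] using hco
  set A := (Ici j).map e.toEmbedding
  obtain ⟨x, hxA, hx⟩ := A.exists_max_image μ ⟨e j, by simp [A]⟩
  have hle := hμ.sum_erase_le hinj hxA hx (hw x).le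
  have hwx : w x ≤ w (e j) := by
    obtain ⟨k, hk, rfl⟩ := mem_map.mp hxA
    exact he j k (mem_Ici.mp hk)
  have hsumA : ∑ y ∈ A, w y = w (e j) + ∑ k ∈ Ioi j, w (e k) := by
    rw [sum_map, ← Ioi_insert, sum_insert notMem_Ioi_self]
    rfl
  rw [sum_erase_eq_sub hxA, hsumA] at hle
  linarith

/-- If the weights are not cumulatively ordered, then in the problem with unit
capacities and identical preferences ranking all objects acceptable in a common fixed order,
no w-popular matching exists. -/
theorem stmt5 {I O : Type} [Fintype I] [Fintype O]
    (hI : 3 ≤ Fintype.card I) (hIO : Fintype.card I ≤ Fintype.card O)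
    (w : I → ℝ) (hw : ∀ i, 0 < w i)
    (e : Fin (Fintype.card I) ≃ I) (he : DecreasingEnum w e)
    (hco : ¬ CumulativelyOrdered w e)
    (p : LinearOrder (Option O)) (hp : ∀ a : O, p.lt none (some a)) :
    ∀ μ : I → Option O, ¬ WPopular w (fun _ => p) (fun _ => 1) μ :=
  stmt5_general hIO w hw e he hco p hp
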